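/- Let θ be an antimorphic involution and u ∈ Σ+ with u ≠ θ(u). If uθ(u) = z^i for a primitive word z, then i is odd and z = xθ(x) for some word x. -/
import Mathlib


variable {α : Type*}

/-- θ is an antimorphic involution on Σ* : θ(uv) = θ(v)θ(u) and θ² = id. -/
def IsAntimorphicInvolution (θ : List α → List α) : Prop :=
  (∀ u v : List α, θ (u ++ v) = θ v ++ θ u) ∧ ∀ u : List α, θ (θ u) = u

/-- The set of θ-conjugates of w: C_θ(w) = { θ(v) ++ u : w = u ++ v }. -/
def thetaConjugates (θ : List α → List α) (w : List α) : Set (List α) :=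
  {x | ∃ u v : List α, w = u ++ v ∧ x = θ v ++ u}

/-- n-fold concatenation power of a word. -/
def listPow (z : List α) (n : ℕ) : List α := (List.replicate n z).flatten

/-- A word is primitive if it is not a proper power. -/
def Primitive (z : List α) : Prop :=
  z ≠ [] ∧ ∀ (t : List α) (k : ℕ), z = listPow t k → k = 1

/-- The conjugacy class of w: { v ++ u : w = u ++ v }. -/
def conjClass (w : List α) : Set (List α) := {x | ∃ u v : List α, w = u ++ v ∧ x = v ++ u}

lemma listPow_succ (z : List α) (n : ℕ) : listPow z (n+1) = z ++ listPow z n := by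
  simp [listPow, List.replicate_succ]

lemma listPow_add (z : List α) (m n : ℕ) : listPow z (m+n) = listPow z m ++ listPow z n := by
  induction m with
  | zero => simp [listPow]
  | succ m ih => rw [Nat.succ_add, listPow_succ, ih, listPow_succ]; simp

lemma listPow_length (z : List α) (n : ℕ) : (listPow z n).length = n * z.length := by
  induction n with
  | zero => simp [listPow]
  | succ n ih => rw [listPow_succ]; simp [ih]; ring

section Theta
variable {θ : List α → List α}

lemma theta_nil (hθ : IsAntimorphicInvolution θ) : θ [] = ([] : List α) := by
  have h := hθ.1 [] []
  simp only [List.append_nil] at h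
  have := congrArg List.length h
  simp at this
  exact this

lemma theta_ne_nil (hθ : IsAntimorphicInvolution θ) (v : List α) (hv : v ≠ []) : θ v ≠ [] := by
  intro hcon
  apply hv
  rw [← hθ.2 v, hcon, theta_nil hθ]

lemma theta_singleton_length (hθ : IsAntimorphicInvolution θ) (a : α) : (θ [a]).length = 1 := by
  have h2 : θ (θ [a]) = [a] := hθ.2 [a]
  rcases hta : θ [a] with _ | ⟨b, t⟩
  · exfalso
    exact theta_ne_nil hθ [a] (by simp) hta
  rcases t with _ | ⟨c, s⟩
  · simp
  · exfalso
    rw [hta] at h2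
    have : θ (b :: c :: s) = θ (c :: s) ++ θ [b] := by
      have := hθ.1 [b] (c :: s); simpa using this
    rw [this] at h2
    have h3 : θ (c :: s) ≠ [] := theta_ne_nil hθ _ (by simp)
    have h4 : θ [b] ≠ [] := theta_ne_nil hθ _ (by simp)
    have := congrArg List.length h2
    simp at this
    have l3 : 1 ≤ (θ (c :: s)).length := List.length_pos_iff.mpr h3
    have l4 : 1 ≤ (θ [b]).length := List.length_pos_iff.mpr h4
    omega

lemma theta_length (hθ : IsAntimorphicInvolution θ) (v : List α) : (θ v).length = v.length := by
  induction v with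
  | nil => rw [theta_nil hθ]
  | cons a v ih =>
    have : θ (a :: v) = θ v ++ θ [a] := by
      have := hθ.1 [a] v; simpa using this
    rw [this]
    simp [ih, theta_singleton_length hθ a]

lemma theta_pow (hθ : IsAntimorphicInvolution θ) (z : List α) (n : ℕ) : θ (listPow z n) = listPow (θ z) n := by
  induction n with
  | zero => simpa [listPow] using theta_nil hθ
  | succ n ih =>
    rw [listPow_succ, hθ.1, ih]
    have : listPow (θ z) (n+1) = listPow (θ z) n ++ θ z := by
      rw [show n + 1 = n + 1 from rfl, listPow_add]
      simp [listPow]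
    rw [this]

end Theta

theorem stmt9 (θ : List α → List α) (hθ : IsAntimorphicInvolution θ)
    (u : List α) (hu : u ≠ []) (hne : u ≠ θ u) (z : List α) (hz : Primitive z)
    (i : ℕ) (h : u ++ θ u = listPow z i) :
    Odd i ∧ ∃ x : List α, z = x ++ θ x := by
  have hθlen := theta_length hθ
  -- w is a θ-palindrome
  have hw : θ (u ++ θ u) = u ++ θ u := by
    rw [hθ.1, hθ.2]
  -- i ≠ 0
  have hi0 : i ≠ 0 := by
    rintro rfl
    simp [listPow] at h
    exact hu h.1
  -- z = θ z
  have hzz : θ z = z := by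
    obtain ⟨k, rfl⟩ := Nat.exists_eq_succ_of_ne_zero hi0
    have h1 : listPow (θ z) (k+1) = listPow z (k+1) := by
      rw [← theta_pow hθ, ← h, hw, h]
    rw [listPow_succ, listPow_succ] at h1
    exact (List.append_inj h1 (hθlen z)).1
  -- length equation
  have hlen : 2 * u.length = i * z.length := by
    have := congrArg List.length h
    rw [listPow_length] at this
    simp [hθlen] at this
    omega
  have hzlen : z.length ≠ 0 := by
    simpa using fun hc => hz.1 (List.eq_nil_of_length_eq_zero hc)
  rcases Nat.even_or_odd i with he | ho
  · -- even case: contradiction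
    exfalso
    obtain ⟨j, rfl⟩ := he
    have hsplit : u ++ θ u = listPow z j ++ listPow z j := by
      rw [h, ← listPow_add]
    have hl : u.length = (listPow z j).length := by
      have e : (j + j) * z.length = 2 * (j * z.length) := by ring
      rw [listPow_length]; omega
    obtain ⟨h1, h2⟩ := List.append_inj hsplit hl
    exact hne (h1.trans h2.symm)
  · refine ⟨ho, ?_⟩
    obtain ⟨j, rfl⟩ := ho
    -- z.length is even
    have h2dvd : 2 ∣ z.length := by
      have : (2:ℕ) ∣ (2 * j + 1) * z.length := ⟨u.length, by omega⟩
      rcases (Nat.Prime.dvd_mul Nat.prime_two).mp this with hc | hc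
      · omega
      · exact hc
    obtain ⟨m, hm⟩ := h2dvd
    set x := z.take m with hxdef
    set y := z.drop m with hydef
    have hxy : z = x ++ y := (List.take_append_drop m z).symm
    have hxlen : x.length = m := by
      simp [hxdef]; omega
    have hylen : y.length = m := by
      simp [hydef]; omega
    have hsplit : u ++ θ u = (listPow z j ++ x) ++ (y ++ listPow z j) := by
      rw [h, show 2 * j + 1 = j + (1 + j) by ring, listPow_add, listPow_add,
        show listPow z 1 = z by simp [listPow]]
      rw [hxy]
      simp [List.append_assoc]
    have hl : u.length = (listPow z j ++ x).length := by
      have e : (2 * j + 1) * z.length = 2 * (j * z.length) + z.length := by ring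
      simp [listPow_length, hxlen]; omega
    obtain ⟨h1, h2⟩ := List.append_inj hsplit hl
    -- compute θ u
    have h3 : θ u = θ x ++ listPow z j := by
      rw [h1, hθ.1, theta_pow hθ, hzz]
    rw [h3] at h2
    have hth : θ x = y := by
      have hlx : (θ x).length = y.length := by rw [hθlen, hxlen, hylen]
      exact (List.append_inj h2 hlx).1
    exact ⟨x, by rw [hxy, hth]⟩
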